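/- arXiv:2109.15015 — 6 statements merged into one kernel-verified Lean document; each statement's English description precedes it below -/
import Mathlib

section
/- Let f : ℝ → ℝ be concave and differentiable on (0,∞), and define g(y) = y·f'(y). If g is non-increasing on (0,∞) and for all x,y > 0 we have g(y)/g(x) ≥ δ for some δ ∈ (0,1] (with g positive), then for any positive reals A_1,…,A_n, B_1,…,B_n and any index i, if ∑_k f'(A_k)·(B_k − A_k) ≤ 0 and −f'(B_i)·B_i + ∑_{k≠i} f'(B_k)·(A_k − B_k) ≤ 0, then for every ℓ ≠ i, A_ℓ ≤ (1 + 3/δ)·B_ℓ. -/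
open Finset

/-- Key lemma behind the q-NNE guarantee: under gradient optimality conditions at the
unconstrained optimum `A` and the constrained optimum `B`, for a δ-scaled rule with
`g(y) = y f'(y)` non-increasing, every other agent `ℓ` satisfies `A ℓ ≤ (1 + 3/δ) B ℓ`. -/
theorem stmt0 (f : ℝ → ℝ) (δ : ℝ) (hδ : 0 < δ) (hδ1 : δ ≤ 1)
    (hconc : ConcaveOn ℝ (Set.Ioi 0) f)
    (hdiff : DifferentiableOn ℝ f (Set.Ioi 0))
    (g : ℝ → ℝ) (hg : ∀ y > 0, g y = y * deriv f y)
    (hmono : AntitoneOn g (Set.Ioi 0))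
    (hgpos : ∀ x > 0, 0 < g x)
    (hscaled : ∀ x > 0, ∀ y > 0, δ ≤ g y / g x)
    (n : ℕ) (A B : Fin n → ℝ)
    (hA : ∀ k, 0 < A k) (hB : ∀ k, 0 < B k)
    (i : Fin n)
    (hopt1 : ∑ k, deriv f (A k) * (B k - A k) ≤ 0)
    (hopt2 : -(deriv f (B i) * B i) + ∑ k ∈ univ \ {i}, deriv f (B k) * (A k - B k) ≤ 0) :
    ∀ ℓ, ℓ ≠ i → A ℓ ≤ (1 + 3 / δ) * B ℓ := by
  intro ℓ hℓ
  have hDA : ∀ k, 0 < deriv f (A k) := by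
    intro k
    have h1 : 0 < A k * deriv f (A k) := by rw [← hg _ (hA k)]; exact hgpos _ (hA k)
    nlinarith [hA k]
  have hDB : ∀ k, 0 < deriv f (B k) := by
    intro k
    have h1 : 0 < B k * deriv f (B k) := by rw [← hg _ (hB k)]; exact hgpos _ (hB k)
    nlinarith [hB k]
  set s : Fin n → ℝ := fun k => deriv f (A k) * (B k - A k) with hsdef
  set t : Fin n → ℝ := fun k => deriv f (B k) * (A k - B k) with htdef
  have key : ∀ k, 0 ≤ s k + t k := by
    intro k
    have h1 : g (A k) = A k * deriv f (A k) := hg _ (hA k)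
    have h2 : g (B k) = B k * deriv f (B k) := hg _ (hB k)
    simp only [hsdef, htdef]
    rcases le_total (A k) (B k) with h | h
    · have hm : g (B k) ≤ g (A k) :=
        hmono (Set.mem_Ioi.mpr (hA k)) (Set.mem_Ioi.mpr (hB k)) h
      rw [h1, h2] at hm
      have hpq : deriv f (B k) ≤ deriv f (A k) := by
        nlinarith [hA k, hB k, hDA k, hDB k,
          mul_nonneg (sub_nonneg.2 h) (hDA k).le, mul_nonneg (sub_nonneg.2 h) (hDB k).le]
      nlinarith [mul_nonneg (sub_nonneg.2 h) (sub_nonneg.2 hpq)]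
    · have hm : g (A k) ≤ g (B k) :=
        hmono (Set.mem_Ioi.mpr (hB k)) (Set.mem_Ioi.mpr (hA k)) h
      rw [h1, h2] at hm
      have hpq : deriv f (A k) ≤ deriv f (B k) := by
        nlinarith [hA k, hB k, hDA k, hDB k,
          mul_nonneg (sub_nonneg.2 h) (hDA k).le, mul_nonneg (sub_nonneg.2 h) (hDB k).le]
      nlinarith [mul_nonneg (sub_nonneg.2 h) (sub_nonneg.2 hpq)]
  have hmemℓ : ℓ ∈ univ.erase i := mem_erase.2 ⟨hℓ, mem_univ ℓ⟩
  have hsplit1 : s i + (s ℓ + ∑ k ∈ (univ.erase i).erase ℓ, s k) ≤ 0 := by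
    rw [Finset.add_sum_erase _ s hmemℓ, Finset.add_sum_erase _ s (mem_univ i)]
    exact hopt1
  have hsplit2 : t ℓ + ∑ k ∈ (univ.erase i).erase ℓ, t k ≤ g (B i) := by
    have h2 : g (B i) = B i * deriv f (B i) := hg _ (hB i)
    have hdiffset : (univ : Finset (Fin n)) \ {i} = univ.erase i := by
      ext x; simp [Finset.mem_erase, and_comm]
    rw [Finset.add_sum_erase _ t hmemℓ, ← hdiffset, h2]
    linarith [hopt2]
  have hsi : -(A i * deriv f (A i)) ≤ s i := by
    simp only [hsdef]; nlinarith [mul_pos (hDA i) (hB i)]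
  have hsℓ : -(A ℓ * deriv f (A ℓ)) ≤ s ℓ := by
    simp only [hsdef]; nlinarith [mul_pos (hDA ℓ) (hB ℓ)]
  have hEsum : -∑ k ∈ (univ.erase i).erase ℓ, t k ≤ ∑ k ∈ (univ.erase i).erase ℓ, s k := by
    rw [← Finset.sum_neg_distrib]
    exact Finset.sum_le_sum fun k _ => by linarith [key k]
  have hmain : t ℓ ≤ g (B i) + A i * deriv f (A i) + A ℓ * deriv f (A ℓ) := by linarith
  have hmain' : t ℓ ≤ g (B i) + g (A i) + g (A ℓ) := by
    rw [hg _ (hA i), hg _ (hA ℓ)]; exact hmain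
  have hb : ∀ x, 0 < x → δ * g x ≤ g (B ℓ) := by
    intro x hx
    have h1 := hscaled x hx (B ℓ) (hB ℓ)
    rw [le_div_iff₀ (hgpos x hx)] at h1
    linarith
  have h3 : δ * t ℓ ≤ 3 * g (B ℓ) := by
    have h0 := mul_le_mul_of_nonneg_left hmain' hδ.le
    have b1 := hb _ (hB i)
    have b2 := hb _ (hA i)
    have b3 := hb _ (hA ℓ)
    nlinarith
  have h4 : δ * (deriv f (B ℓ) * (A ℓ - B ℓ)) ≤ 3 * (B ℓ * deriv f (B ℓ)) := by
    rw [← hg _ (hB ℓ)]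
    simpa only [htdef] using h3
  have h5 : δ * (A ℓ - B ℓ) ≤ 3 * B ℓ :=
    le_of_mul_le_mul_right (by nlinarith) (hDB ℓ)
  have hrw : (1 + 3 / δ) = (δ + 3) / δ := by field_simp
  rw [hrw, div_mul_eq_mul_div, le_div_iff₀ hδ]
  nlinarith
end

section
/- Let n ≥ 2 and let r_1,…,r_n be positive reals with index i fixed. If 1/r_i + ∑_{k≠i} 1/r_k ≤ n and ∑_{k≠i} r_k ≤ n, then 1/r_i ≤ 2, i.e., r_i ≥ 1/2. -/
open Finset

/-- Nash Welfare is 1/2-monotone: key computation on the ratios `r_k`. -/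
theorem stmt2 (n : ℕ) (hn : 2 ≤ n) (r : Fin n → ℝ) (hr : ∀ k, 0 < r k) (i : Fin n)
    (h1 : 1 / r i + ∑ k ∈ univ \ {i}, 1 / r k ≤ (n : ℝ))
    (h2 : ∑ k ∈ univ \ {i}, r k ≤ (n : ℝ)) :
    1 / r i ≤ 2 ∧ (1 : ℝ) / 2 ≤ r i := by
  set s : Finset (Fin n) := univ \ {i} with hs
  have hcard : (s.card : ℝ) = (n : ℝ) - 1 := by
    have : s.card = n - 1 := by
      rw [hs, Finset.card_sdiff_of_subset (by simp)]; simp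
    rw [this]
    have : (1:ℕ) ≤ n := by omega
    push_cast [Nat.cast_sub this]
    ring
  have hA : (0:ℝ) < ∑ k ∈ s, r k := by
    apply Finset.sum_pos (fun k _ => hr k)
    have : ∃ j : Fin n, j ≠ i := by
      have : 1 < Fintype.card (Fin n) := by rw [Fintype.card_fin]; omega
      exact Fintype.exists_ne_of_one_lt_card this i
    obtain ⟨j, hj⟩ := this
    exact ⟨j, by simp [hs, hj]⟩
  -- Cauchy-Schwarz: (card)^2 ≤ (∑ r)(∑ 1/r)
  have hcs : ((s.card : ℝ))^2 ≤ (∑ k ∈ s, r k) * ∑ k ∈ s, 1 / r k := by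
    have := Finset.sum_mul_sq_le_sq_mul_sq s (fun k => Real.sqrt (r k))
      (fun k => Real.sqrt (1 / r k))
    have heq : ∑ k ∈ s, Real.sqrt (r k) * Real.sqrt (1 / r k) = (s.card : ℝ) := by
      have : ∀ k ∈ s, Real.sqrt (r k) * Real.sqrt (1 / r k) = 1 := by
        intro k _
        rw [← Real.sqrt_mul (hr k).le]
        rw [mul_one_div, div_self (hr k).ne', Real.sqrt_one]
      rw [Finset.sum_congr rfl this]
      simp
    have heq2 : ∀ k ∈ s, Real.sqrt (r k) ^ 2 = r k := fun k _ => Real.sq_sqrt (hr k).le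
    have heq3 : ∀ k ∈ s, Real.sqrt (1 / r k) ^ 2 = 1 / r k := fun k _ =>
      Real.sq_sqrt (one_div_nonneg.mpr (hr k).le)
    rw [heq, Finset.sum_congr rfl heq2, Finset.sum_congr rfl heq3] at this
    exact this
  have hB : ((n:ℝ) - 1)^2 / (n : ℝ) ≤ ∑ k ∈ s, 1 / r k := by
    rw [hcard] at hcs
    have hn0 : (0:ℝ) < n := by positivity
    rw [div_le_iff₀ hn0]
    calc ((n:ℝ)-1)^2 ≤ (∑ k ∈ s, r k) * ∑ k ∈ s, 1 / r k := hcs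
      _ ≤ (n:ℝ) * ∑ k ∈ s, 1 / r k := by
          apply mul_le_mul_of_nonneg_right h2
          exact Finset.sum_nonneg fun k _ => one_div_nonneg.mpr (hr k).le
      _ = (∑ k ∈ s, 1 / r k) * n := by ring
  have key : 1 / r i ≤ 2 := by
    have hn0 : (0:ℝ) < n := by positivity
    have h3 : 1 / r i ≤ (n:ℝ) - ((n:ℝ)-1)^2 / n := by linarith
    have h4 : (n:ℝ) - ((n:ℝ)-1)^2 / n ≤ 2 := by
      have he : (n:ℝ) - ((n:ℝ)-1)^2 / n = (2*n - 1) / n := by field_simp; ring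
      rw [he, div_le_iff₀ hn0]; linarith
    linarith
  refine ⟨key, ?_⟩
  have hri := hr i
  rw [div_le_iff₀ hri] at key
  linarith
end

section
/- Fix γ ∈ (-∞, 1], γ ≠ 0, and positive reals A_1,…,A_n, B_1,…,B_n with A_i = 1 for a fixed index i; write x = B_i. If x^γ + ∑_{k≠i} B_k^γ ≥ ∑_{k≠i} A_k·B_k^{γ-1} and 1 + ∑_{k≠i} A_k^γ ≥ x + ∑_{k≠i} B_k·A_k^{γ-1}, then x − x^γ ≤ 1. -/
open Finset

lemma key_pt (γ : ℝ) (hγ : γ ≤ 1) (a b : ℝ) (ha : 0 < a) (hb : 0 < b) :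
    a ^ γ + b ^ γ ≤ a * b ^ (γ - 1) + b * a ^ (γ - 1) := by
  have haγ : a ^ γ = a * a ^ (γ - 1) := by
    rw [show γ = 1 + (γ - 1) by ring, Real.rpow_add ha, Real.rpow_one]; ring_nf
  have hbγ : b ^ γ = b * b ^ (γ - 1) := by
    rw [show γ = 1 + (γ - 1) by ring, Real.rpow_add hb, Real.rpow_one]; ring_nf
  have hsign : 0 ≤ (a - b) * (b ^ (γ - 1) - a ^ (γ - 1)) := by
    rcases le_total a b with h | h
    · have := Real.rpow_le_rpow_of_nonpos ha h (by linarith : γ - 1 ≤ 0)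
      nlinarith
    · have := Real.rpow_le_rpow_of_nonpos hb h (by linarith : γ - 1 ≤ 0)
      nlinarith
  nlinarith [haγ, hbγ, hsign]

/-- Core step of the γ-fair monotonicity bound: the two gradient optimality conditions
imply `x − x^γ ≤ 1` where `x = B i` is agent `i`'s constrained value. -/
theorem stmt5 (γ : ℝ) (hγ : γ ≤ 1) (hγ0 : γ ≠ 0)
    (n : ℕ) (A B : Fin n → ℝ) (hA : ∀ k, 0 < A k) (hB : ∀ k, 0 < B k)
    (i : Fin n) (hAi : A i = 1) (x : ℝ) (hx : x = B i)
    (h1 : ∑ k ∈ univ \ {i}, A k * B k ^ (γ - 1) ≤ x ^ γ + ∑ k ∈ univ \ {i}, B k ^ γ)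
    (h2 : x + ∑ k ∈ univ \ {i}, B k * A k ^ (γ - 1) ≤ 1 + ∑ k ∈ univ \ {i}, A k ^ γ) :
    x - x ^ γ ≤ 1 := by
  have hsum : ∑ k ∈ univ \ {i}, (A k ^ γ + B k ^ γ) ≤
      ∑ k ∈ univ \ {i}, (A k * B k ^ (γ - 1) + B k * A k ^ (γ - 1)) :=
    Finset.sum_le_sum fun k _ => key_pt γ hγ _ _ (hA k) (hB k)
  simp only [Finset.sum_add_distrib] at hsum
  linarith
end

section
/- Let f be concave differentiable with g(y) = y·f'(y) non-increasing and g(y)/g(x) ≥ δ for all x,y > 0. Let S be a set of k indices not containing ℓ, and let A_1,…,A_n, B_1,…,B_n be positive reals with r_j = A_j/B_j. If g(A_ℓ)/r_ℓ + ∑_{j≠ℓ} g(A_j)/r_j ≤ ∑_j g(A_j) and g(B_ℓ)·r_ℓ + ∑_{j∉S∪{ℓ}} g(B_j)·r_j ≤ ∑_j g(B_j), then r_ℓ ≤ 1 + (2k+1)/δ. -/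
open Finset

/-- Generalized NNE bound when a set `S` of `k` agents imposes diversity constraints:
under the two gradient optimality conditions, any unconstrained agent `ℓ` satisfies
`r_ℓ ≤ 1 + (2k+1)/δ` where `r_j = A_j / B_j`. -/
theorem stmt12 (g : ℝ → ℝ) (δ : ℝ) (hδ : 0 < δ)
    (hmono : AntitoneOn g (Set.Ioi 0))
    (hgpos : ∀ x > 0, 0 < g x)
    (hscaled : ∀ x > 0, ∀ y > 0, δ ≤ g y / g x)
    (n k : ℕ) (S : Finset (Fin n)) (hS : S.card = k)
    (ℓ : Fin n) (hℓ : ℓ ∉ S)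
    (A B : Fin n → ℝ) (hA : ∀ j, 0 < A j) (hB : ∀ j, 0 < B j)
    (r : Fin n → ℝ) (hr : ∀ j, r j = A j / B j)
    (h1 : g (A ℓ) / r ℓ + ∑ j ∈ univ \ {ℓ}, g (A j) / r j ≤ ∑ j, g (A j))
    (h2 : g (B ℓ) * r ℓ + ∑ j ∈ univ \ (S ∪ {ℓ}), g (B j) * r j ≤ ∑ j, g (B j)) :
    r ℓ ≤ 1 + (2 * k + 1) / δ := by
  have hrpos : ∀ j, 0 < r j := fun j => by rw [hr]; exact div_pos (hA j) (hB j)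
  have hgA : ∀ j, 0 < g (A j) := fun j => hgpos _ (hA j)
  have hgB : ∀ j, 0 < g (B j) := fun j => hgpos _ (hB j)
  -- the key rearrangement inequality, valid for every index
  have key : ∀ j, g (A j) + g (B j) ≤ g (A j) / r j + g (B j) * r j := by
    intro j
    have ht : g (A j) / r j * r j = g (A j) := div_mul_cancel₀ _ (ne_of_gt (hrpos j))
    rcases le_total 1 (r j) with h | h
    · have hAB : B j ≤ A j := by
        have h' := h
        rw [hr j, le_div_iff₀ (hB j), one_mul] at h'
        exact h'
      have hg : g (A j) ≤ g (B j) :=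
        hmono (Set.mem_Ioi.mpr (hB j)) (Set.mem_Ioi.mpr (hA j)) hAB
      have h1' : g (A j) / r j ≤ g (A j) := by
        rw [div_le_iff₀ (hrpos j)]
        nlinarith [hgA j]
      nlinarith [hgB j, hrpos j]
    · have hAB : A j ≤ B j := by
        have h' := h
        rw [hr j, div_le_one (hB j)] at h'
        exact h'
      have hg : g (B j) ≤ g (A j) :=
        hmono (Set.mem_Ioi.mpr (hA j)) (Set.mem_Ioi.mpr (hB j)) hAB
      have h1' : g (A j) ≤ g (A j) / r j := by
        rw [le_div_iff₀ (hrpos j)]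
        nlinarith [hgA j]
      nlinarith [hgB j, hrpos j]
  -- set decompositions
  have hTset : univ \ (S ∪ {ℓ}) = (univ \ {ℓ}) \ S := by
    ext x; simp [and_comm]
  have hSsub : S ⊆ univ \ {ℓ} := by
    intro x hx
    simp only [mem_sdiff, mem_univ, mem_singleton, true_and]
    rintro rfl; exact hℓ hx
  have hsplit : ∀ f : Fin n → ℝ,
      ∑ j ∈ univ \ {ℓ}, f j = ∑ j ∈ univ \ (S ∪ {ℓ}), f j + ∑ j ∈ S, f j := by
    intro f
    rw [hTset]
    exact (Finset.sum_sdiff hSsub).symm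
  have hins : ∀ f : Fin n → ℝ, ∑ j, f j = f ℓ + ∑ j ∈ univ \ {ℓ}, f j := by
    intro f
    rw [← Finset.sum_erase_add univ f (mem_univ ℓ)]
    rw [Finset.sdiff_singleton_eq_erase]
    ring
  -- sum the key inequality over T = univ \ (S ∪ {ℓ})
  have hkeyT : ∑ j ∈ univ \ (S ∪ {ℓ}), (g (A j) + g (B j)) ≤
      ∑ j ∈ univ \ (S ∪ {ℓ}), (g (A j) / r j + g (B j) * r j) :=
    Finset.sum_le_sum fun j _ => key j
  rw [Finset.sum_add_distrib, Finset.sum_add_distrib] at hkeyT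
  -- rewrite h1 and h2
  rw [hins (fun j => g (A j)), hsplit (fun j => g (A j) / r j),
    hsplit (fun j => g (A j))] at h1
  rw [hins (fun j => g (B j)), hsplit (fun j => g (B j))] at h2
  -- positivity of leftover terms
  have hposℓ : 0 < g (A ℓ) / r ℓ := div_pos (hgA ℓ) (hrpos ℓ)
  have hposS : 0 ≤ ∑ j ∈ S, g (A j) / r j :=
    Finset.sum_nonneg fun j _ => le_of_lt (div_pos (hgA j) (hrpos j))
  -- combined inequality
  have hmain : g (B ℓ) * r ℓ ≤ g (A ℓ) + g (B ℓ) + ∑ j ∈ S, g (A j) + ∑ j ∈ S, g (B j) := by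
    linarith
  -- bounds via hscaled
  have hbound : ∀ x > 0, g x ≤ g (B ℓ) / δ := by
    intro x hx
    have := hscaled x hx (B ℓ) (hB ℓ)
    rw [le_div_iff₀ (hgpos x hx)] at this
    rw [le_div_iff₀ hδ]
    linarith
  have hAbound : g (A ℓ) ≤ g (B ℓ) / δ := hbound _ (hA ℓ)
  have hSA : ∑ j ∈ S, g (A j) ≤ k * (g (B ℓ) / δ) := by
    calc ∑ j ∈ S, g (A j) ≤ ∑ j ∈ S, g (B ℓ) / δ :=
          Finset.sum_le_sum fun j _ => hbound _ (hA j)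
      _ = k * (g (B ℓ) / δ) := by rw [Finset.sum_const, hS]; simp [nsmul_eq_mul]
  have hSB : ∑ j ∈ S, g (B j) ≤ k * (g (B ℓ) / δ) := by
    calc ∑ j ∈ S, g (B j) ≤ ∑ j ∈ S, g (B ℓ) / δ :=
          Finset.sum_le_sum fun j _ => hbound _ (hB j)
      _ = k * (g (B ℓ) / δ) := by rw [Finset.sum_const, hS]; simp [nsmul_eq_mul]
  have heq : g (B ℓ) * (1 + (2 * (k : ℝ) + 1) / δ) =
      g (B ℓ) + g (B ℓ) / δ + (k : ℝ) * (g (B ℓ) / δ) + (k : ℝ) * (g (B ℓ) / δ) := by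
    field_simp; ring
  have hfin : g (B ℓ) * r ℓ ≤ g (B ℓ) * (1 + (2 * (k : ℝ) + 1) / δ) := by
    rw [heq]; linarith
  exact le_of_mul_le_mul_left hfin (hgB ℓ)
end

section
/- Specializing to Nash Welfare (g ≡ 1, δ = 1): if positive reals r_1,…,r_n and index sets satisfy 1/r_ℓ + ∑_{j≠ℓ} 1/r_j ≤ n and r_ℓ + ∑_{j∉S∪{ℓ}} r_j ≤ n for a set S of size k with ℓ ∉ S, then r_ℓ ≤ 2(k+1), i.e., the value of agent ℓ decreases by a factor of at most 2(k+1). -/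
open Finset

/-- Nash Welfare with `k` simultaneously constrained agents: any unconstrained agent's
value ratio `r_ℓ` is at most `2(k+1)`. -/
theorem stmt13 (n k : ℕ) (S : Finset (Fin n)) (hS : S.card = k)
    (ℓ : Fin n) (hℓ : ℓ ∉ S)
    (r : Fin n → ℝ) (hr : ∀ j, 0 < r j)
    (h1 : 1 / r ℓ + ∑ j ∈ univ \ {ℓ}, 1 / r j ≤ (n : ℝ))
    (h2 : r ℓ + ∑ j ∈ univ \ (S ∪ {ℓ}), r j ≤ (n : ℝ)) :
    r ℓ ≤ 2 * (k + 1) := by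
  have hn : 0 < n := ℓ.pos
  set T : Finset (Fin n) := univ \ (S ∪ {ℓ}) with hT
  have hdisj : Disjoint S {ℓ} := by simp [hℓ]
  have hcard : (S ∪ {ℓ}).card = k + 1 := by
    rw [Finset.card_union_of_disjoint hdisj, hS, Finset.card_singleton]
  have hkn : k + 1 ≤ n := by
    calc k + 1 = (S ∪ {ℓ}).card := hcard.symm
    _ ≤ n := by simpa using Finset.card_le_univ (S ∪ {ℓ})
  have hTcard : T.card = n - (k + 1) := by
    rw [hT, Finset.card_sdiff_of_subset (Finset.subset_univ _), Finset.card_univ,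
      Fintype.card_fin, hcard]
  have hM : (T.card : ℝ) = (n : ℝ) - (k + 1) := by
    rw [hTcard]
    push_cast [Nat.cast_sub hkn]
    ring
  set a : ℝ := ∑ j ∈ T, r j with ha
  set b : ℝ := ∑ j ∈ T, 1 / r j with hb
  have ha0 : 0 ≤ a := Finset.sum_nonneg fun j _ => (hr j).le
  have hb0 : 0 ≤ b := Finset.sum_nonneg fun j _ => by have := hr j; positivity
  -- b ≤ n
  have hbn : b ≤ (n : ℝ) := by
    have hsub : T ⊆ univ \ {ℓ} := by
      intro x hx
      simp only [hT, Finset.mem_sdiff, Finset.mem_union] at hx ⊢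
      exact ⟨hx.1, fun h => hx.2 (Or.inr h)⟩
    have h3 : b ≤ ∑ j ∈ univ \ {ℓ}, 1 / r j :=
      Finset.sum_le_sum_of_subset_of_nonneg hsub (fun j _ _ => by have := hr j; positivity)
    have h4 : 0 < 1 / r ℓ := by have := hr ℓ; positivity
    linarith
  -- Cauchy-Schwarz: card^2 ≤ a * b
  have hcs : ((T.card : ℝ)) ^ 2 ≤ a * b := by
    have := Finset.sum_mul_sq_le_sq_mul_sq T
      (fun j => Real.sqrt (r j)) (fun j => Real.sqrt (1 / r j))
    have e1 : ∀ j ∈ T, Real.sqrt (r j) * Real.sqrt (1 / r j) = 1 := by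
      intro j _
      rw [← Real.sqrt_mul (hr j).le]
      rw [mul_one_div, div_self (hr j).ne', Real.sqrt_one]
    have e2 : ∀ j ∈ T, Real.sqrt (r j) ^ 2 = r j := fun j _ =>
      Real.sq_sqrt (hr j).le
    have e3 : ∀ j ∈ T, Real.sqrt (1 / r j) ^ 2 = 1 / r j := fun j _ =>
      Real.sq_sqrt (by have := hr j; positivity)
    rw [Finset.sum_congr rfl e1, Finset.sum_congr rfl e2,
      Finset.sum_congr rfl e3, Finset.sum_const, nsmul_eq_mul, mul_one] at this
    simpa [ha, hb, one_div] using this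
  have hcs2 : ((n : ℝ) - (k + 1)) ^ 2 ≤ a * (n : ℝ) := by
    calc ((n : ℝ) - (k + 1)) ^ 2 = ((T.card : ℝ)) ^ 2 := by rw [hM]
    _ ≤ a * b := hcs
    _ ≤ a * n := mul_le_mul_of_nonneg_left hbn ha0
  have hnpos : (0 : ℝ) < n := by exact_mod_cast hn
  nlinarith [hcs2, h2, hnpos, mul_le_mul_of_nonneg_left (show (k:ℝ)+1 ≤ n by exact_mod_cast hkn) hnpos.le]
end

section
/- Consider 2 items a, b and 2 agents with v_{1a} = v_{2a} = v_{2b} = 1 and all other values 0, and let ε > 0. Among allocations where agent 2 must satisfy ε·x_{2a} = x_{2b}, every allocation of the form x_{1a} = 1−x, x_{2a} = x, x_{2b} = εx with x < 1/(2+ε) admits a Pigou–Dalton improvement (a transfer from agent 1, whose value is 1−x, to agent 2, whose value is (1+ε)x, with 1−x > (1+ε)x, preserving total value). Hence any allocation rule satisfying Pareto-optimality and the Pigou–Dalton principle yields agent 1 value at most (1+ε)/(2+ε) under the constraint, whereas without the constraint Pigou–Dalton forces agent 1's value to equal 1. -/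
open Filter

/-- Lower bound instance: two items, two agents, `v_{1a} = v_{2a} = v_{2b} = 1`, agent 2
constrained by `ε x_{2a} = x_{2b}`. With `x = x_{2a}`, values are `V1 = 1−x` and
`V2 = (1+ε)x`. (i) Any `x < 1/(2+ε)` admits a Pigou–Dalton improvement: a feasible
transfer to a larger `x'` that raises the poorer agent 2, lowers the richer agent 1,
without letting them cross. Hence any PO+PD allocation has `x ≥ 1/(2+ε)` and agent 1's
value is at most `(1+ε)/(2+ε)`, while without the constraint it is `1`.
(ii) `(1+ε)/(2+ε) → 1/2` as `ε → 0⁺`, so no PO+PD rule is q-NNE for `q > 1/2`. -/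
theorem stmt14 (ε : ℝ) (hε : 0 < ε) :
    (∀ x : ℝ, 0 ≤ x → x < 1 / (2 + ε) →
      (1 + ε) * x < 1 - x ∧
      ∃ x' : ℝ, x < x' ∧ x' ≤ 1 / (2 + ε) ∧
        (1 + ε) * x < (1 + ε) * x' ∧ 1 - x' < 1 - x ∧ (1 + ε) * x' ≤ 1 - x') ∧
    (∀ x : ℝ, 1 / (2 + ε) ≤ x → 1 - x ≤ (1 + ε) / (2 + ε)) ∧
    Tendsto (fun e : ℝ => (1 + e) / (2 + e)) (nhdsWithin 0 (Set.Ioi 0))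
      (nhds (1 / 2)) := by
  have h2 : (0:ℝ) < 2 + ε := by linarith
  have heq : (1 + ε) * (1 / (2 + ε)) = 1 - 1 / (2 + ε) := by
    field_simp; ring
  refine ⟨?_, ?_, ?_⟩
  · intro x hx hlt
    have hxe : x * (2 + ε) < 1 := (lt_div_iff₀ h2).mp hlt
    refine ⟨by nlinarith, 1 / (2 + ε), hlt, le_rfl, ?_, by linarith, heq.le⟩
    exact mul_lt_mul_of_pos_left hlt (by linarith)
  · intro x hx
    have : 1 - 1 / (2 + ε) = (1 + ε) / (2 + ε) := by field_simp; ring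
    linarith [this ▸ (by linarith : 1 - x ≤ 1 - 1 / (2 + ε))]
  · have hc : ContinuousAt (fun e : ℝ => (1 + e) / (2 + e)) 0 :=
      (continuousAt_const.add continuousAt_id).div
        (continuousAt_const.add continuousAt_id) (by norm_num)
    have := hc.tendsto
    simp only [add_zero] at this
    exact this.mono_left nhdsWithin_le_nhds
end
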